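/- arXiv:2604.27235 — 3 statements merged into one kernel-verified Lean document; each statement's English description precedes it below -/
import Mathlib

section
/- Let q be an odd prime power, let n ≥ n₀ ≥ 1 be integers, let g ∈ GL_{n₀}(𝔽_q) be regarded as an element of GL_n(𝔽_q) via the block-diagonal embedding, and let d be a positive integer coprime to q. Let χ be an irreducible complex character of GL_n(𝔽_q). If for every prime ℓ dividing d one has v_ℓ(χ(1)) − v_ℓ(∏_{i=0}^{n₀−1} (q^{n−i} − 1)) ≥ v_ℓ(d), then d divides χ(g), i.e. χ(g)/d is an algebraic integer. -/
open CategoryTheory Matrix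
open Polynomial Finset in
section
open Polynomial Finset

/-- The block-diagonal embedding `GL_{n₀}(F) → GL_n(F)`, `g ↦ diag(g, I_{n-n₀})`. -/
noncomputable def glEmbed (F : Type) [Field F] {n₀ n : ℕ} (h : n₀ ≤ n)
    (g : GL (Fin n₀) F) : GL (Fin n) F :=
  Units.map
    ((Matrix.reindexAlgEquiv F F
        (finSumFinEquiv.trans (finCongr (Nat.add_sub_cancel' h)) :
          Fin n₀ ⊕ Fin (n - n₀) ≃ Fin n)).toRingEquiv.toMonoidHom)
    ⟨Matrix.fromBlocks g.val 0 0 1, Matrix.fromBlocks (↑g⁻¹) 0 0 1,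
      by
        rw [Matrix.fromBlocks_multiply]
        simp only [Matrix.mul_zero, Matrix.zero_mul, Matrix.mul_one, Matrix.one_mul,
          mul_zero, zero_mul, mul_one, one_mul, add_zero, zero_add,
          Units.mul_inv, Units.inv_mul]
        rw [Matrix.fromBlocks_one],
      by
        rw [Matrix.fromBlocks_multiply]
        simp only [Matrix.mul_zero, Matrix.zero_mul, Matrix.mul_one, Matrix.one_mul,
          mul_zero, zero_mul, mul_one, one_mul, add_zero, zero_add,
          Units.mul_inv, Units.inv_mul]
        rw [Matrix.fromBlocks_one]⟩


lemma pow_root_charpoly {N : Type*} [Fintype N] [DecidableEq N]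
    (M : Matrix N N ℂ) (m : ℕ) (hM : M ^ m = 1) {μ : ℂ}
    (hμ : μ ∈ M.charpoly.roots) : μ ^ m = 1 := by
  have hroot : M.charpoly.IsRoot μ := isRoot_of_mem_roots hμ
  have hdet : ((Matrix.diagonal (fun _ : N => μ)) - M).det = 0 := by
    have heq : ((charmatrix M).map (evalRingHom μ)) = (Matrix.diagonal (fun _ : N => μ)) - M := by
      ext i j
      by_cases h : i = j
      · subst h; simp [charmatrix_apply_eq]
      · simp [charmatrix_apply_ne _ _ _ h, Matrix.diagonal_apply_ne _ h]
    have h2 := (RingHom.map_det (evalRingHom μ) (charmatrix M))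
    rw [RingHom.mapMatrix_apply, heq] at h2
    rw [← h2]
    simpa [Matrix.charpoly] using hroot
  obtain ⟨v, hv0, hv⟩ := (Matrix.exists_mulVec_eq_zero_iff).2 hdet
  have hMv : M *ᵥ v = μ • v := by
    have h4 : (Matrix.diagonal (fun _ : N => μ)) *ᵥ v - M *ᵥ v = 0 := by
      rw [← Matrix.sub_mulVec]; exact hv
    have h3 : (Matrix.diagonal (fun _ : N => μ)) *ᵥ v = μ • v := by
      ext i; simp [Matrix.mulVec_diagonal]
    rw [h3] at h4
    have := sub_eq_zero.mp h4
    exact this.symm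
  have hpow : ∀ j : ℕ, (M ^ j) *ᵥ v = μ ^ j • v := by
    intro j
    induction j with
    | zero => simp
    | succ i ih =>
      rw [pow_succ', pow_succ', ← Matrix.mulVec_mulVec, ih, Matrix.mulVec_smul, hMv,
        smul_smul, mul_comm]
  have h5 := hpow m
  rw [hM, Matrix.one_mulVec] at h5
  obtain ⟨i, hi⟩ := Function.ne_iff.mp hv0
  have : v i = (μ ^ m) * v i := by
    have := congrFun h5 i
    simpa using this
  have h6 : μ ^ m * v i = 1 * v i := by rw [one_mul]; exact this.symm
  exact mul_right_cancel₀ hi h6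

lemma isIntegral_of_pow_eq_one {μ : ℂ} {m : ℕ} (hm : m ≠ 0) (h : μ ^ m = 1) :
    IsIntegral ℤ μ := by
  refine ⟨X ^ m - 1, ?_, ?_⟩
  · simpa using monic_X_pow_sub_C (1 : ℤ) hm
  · simp [eval₂_sub, eval₂_pow, h]

lemma multiset_sum_isIntegral {s : Multiset ℂ} (h : ∀ x ∈ s, IsIntegral ℤ x) :
    IsIntegral ℤ s.sum := by
  induction s using Multiset.induction_on with
  | empty => simpa using isIntegral_zero
  | cons a t ih =>
    rw [Multiset.sum_cons]
    exact (h a (Multiset.mem_cons_self a t)).add (ih fun x hx => h x (Multiset.mem_cons_of_mem hx))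

lemma char_isIntegral {G : Type} [Group G] [Finite G] (V : FDRep ℂ G) (x : G) :
    IsIntegral ℤ (V.character x) := by
  classical
  let b := Module.finBasis ℂ V
  let M := LinearMap.toMatrix b b (V.ρ x)
  have htr : V.character x = M.trace := LinearMap.trace_eq_matrix_trace ℂ b (V.ρ x)
  have hMpow : M ^ (orderOf x) = 1 := by
    have h0 : (V.ρ x) ^ (orderOf x) = 1 := by
      rw [← map_pow V.ρ, pow_orderOf_eq_one x, _root_.map_one]
    have : (LinearMap.toMatrixAlgEquiv b) ((V.ρ x) ^ (orderOf x)) = M ^ (orderOf x) := by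
      rw [map_pow]; rfl
    rw [← this, h0, _root_.map_one]
  have hm : orderOf x ≠ 0 := (orderOf_pos x).ne'
  rw [htr, Matrix.trace_eq_sum_roots_charpoly]
  exact multiset_sum_isIntegral fun μ hμ =>
    isIntegral_of_pow_eq_one hm (pow_root_charpoly M _ hMpow hμ)



lemma classSum_scalar {G : Type} [Group G] [Fintype G] [DecidableEq G]
    (V : FDRep ℂ G) (hV : Simple V) (x : G) :
    ∃ c : ℂ, IsIntegral ℤ c ∧
      c * (Module.finrank ℂ V : ℂ) =
        ((Nat.card {h : G // IsConj x h}) : ℂ) * V.character x := by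
  classical
  set K := Finset.univ.filter (fun h => IsConj x h) with hK
  have hKcard : Nat.card {h : G // IsConj x h} = K.card := by
    rw [Nat.card_eq_fintype_card, hK]
    convert Fintype.card_subtype (fun h => IsConj x h)
  set T : Module.End ℂ V := ∑ h ∈ K, V.ρ h with hT
  have hcomm : ∀ y : G, V.ρ y * T = T * V.ρ y := by
    intro y
    rw [hT, Finset.mul_sum, Finset.sum_mul]
    refine Finset.sum_nbij' (fun h => y * h * y⁻¹) (fun h => y⁻¹ * h * y) ?_ ?_ ?_ ?_ ?_
    · intro h hh
      simp only [hK, Finset.mem_filter, Finset.mem_univ, true_and] at hh ⊢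
      exact hh.trans (isConj_iff.mpr ⟨y, rfl⟩)
    · intro h hh
      simp only [hK, Finset.mem_filter, Finset.mem_univ, true_and] at hh ⊢
      refine hh.trans (isConj_iff.mpr ⟨y⁻¹, by group⟩)
    · intro h _; group
    · intro h _; group
    · intro h _
      rw [← _root_.map_mul, ← _root_.map_mul]
      congr 1
      group
  -- build the morphism
  haveI := hV
  let φ : V ⟶ V := ⟨FGModuleCat.ofHom T, fun g => FGModuleCat.hom_ext (LinearMap.ext fun v => (LinearMap.congr_fun (hcomm g) v).symm)⟩
  obtain ⟨c, hc⟩ := CategoryTheory.endomorphism_simple_eq_smul_id ℂ φ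
  have hchom : T = c • LinearMap.id := by
    have := congrArg (fun f : V ⟶ V => f.hom.hom.hom) hc
    exact this.symm
  refine ⟨c, ?_, ?_⟩
  · -- integrality
    have hTalg : T = algebraMap ℂ (Module.End ℂ V) c := by
      rw [Module.algebraMap_end_eq_smul_id, hchom]
    have hmem : T ∈ Algebra.adjoin ℤ (Set.range fun g : G => (V.ρ g : Module.End ℂ V)) := by
      rw [hT]
      exact Subalgebra.sum_mem _ fun h _ => Algebra.subset_adjoin ⟨h, rfl⟩
    have hfg : (Subalgebra.toSubmodule
        (Algebra.adjoin ℤ (Set.range fun g : G => (V.ρ g : Module.End ℂ V)))).FG := by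
      rw [Algebra.adjoin_eq_span]
      have hcl : (Submonoid.closure (Set.range fun g : G => (V.ρ g : Module.End ℂ V)) :
          Set (Module.End ℂ V)) = Set.range fun g : G => (V.ρ g : Module.End ℂ V) := by
        have : Set.range (fun g : G => (V.ρ g : Module.End ℂ V)) = ↑(MonoidHom.mrange V.ρ) := by
          simp [MonoidHom.coe_mrange]
        rw [this, Submonoid.closure_eq]
      rw [hcl]
      exact Submodule.fg_def.mpr ⟨_, Set.finite_range _, rfl⟩
    have hint : IsIntegral ℤ T := IsIntegral.of_mem_of_fg _ hfg T hmem
    rw [hTalg] at hint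
    have hinj : Function.Injective (algebraMap ℂ (Module.End ℂ V)) := by
      have hnt : Nontrivial V := by
        by_contra hns
        rw [not_nontrivial_iff_subsingleton] at hns
        have hid : (𝟙 V : V ⟶ V) = 0 := Action.hom_ext _ _ (FGModuleCat.hom_ext (LinearMap.ext fun v => hns.elim _ _))
        exact CategoryTheory.id_nonzero V hid
      have : Nontrivial (Module.End ℂ V) := by
        obtain ⟨v, hv⟩ := exists_ne (0 : V)
        exact ⟨LinearMap.id, 0, fun h => hv (by simpa using LinearMap.congr_fun h v)⟩
      exact (algebraMap ℂ (Module.End ℂ V)).injective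
    exact (isIntegral_algebraMap_iff hinj).mp hint
  · -- trace
    have h1 : LinearMap.trace ℂ V T = (K.card : ℂ) * V.character x := by
      rw [hT, map_sum]
      have : ∀ h ∈ K, LinearMap.trace ℂ V (V.ρ h) = V.character x := by
        intro h hh
        simp only [hK, Finset.mem_filter, Finset.mem_univ, true_and] at hh
        obtain ⟨y, hy⟩ := isConj_iff.mp hh
        rw [← hy]
        exact V.char_conj x y
      rw [Finset.sum_congr rfl this, Finset.sum_const, nsmul_eq_mul]
    have h2 : LinearMap.trace ℂ V T = c * (Module.finrank ℂ V : ℂ) := by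
      rw [hchom, _root_.map_smul, LinearMap.trace_id, smul_eq_mul]
    rw [← h2, h1, hKcard]


/-- complementary embedding GL_m -> GL_n into the bottom-right block -/
noncomputable def glEmbed₂ (F : Type) [Field F] {n₀ n : ℕ} (h : n₀ ≤ n)
    (u : GL (Fin (n - n₀)) F) : GL (Fin n) F :=
  Units.map
    ((Matrix.reindexAlgEquiv F F
        (finSumFinEquiv.trans (finCongr (Nat.add_sub_cancel' h)) :
          Fin n₀ ⊕ Fin (n - n₀) ≃ Fin n)).toRingEquiv.toMonoidHom)
    ⟨Matrix.fromBlocks 1 0 0 u.val, Matrix.fromBlocks 1 0 0 (↑u⁻¹),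
      by
        rw [Matrix.fromBlocks_multiply]
        simp only [Matrix.mul_zero, Matrix.zero_mul, Matrix.mul_one, Matrix.one_mul,
          mul_zero, zero_mul, mul_one, one_mul, add_zero, zero_add,
          Units.mul_inv, Units.inv_mul]
        rw [Matrix.fromBlocks_one],
      by
        rw [Matrix.fromBlocks_multiply]
        simp only [Matrix.mul_zero, Matrix.zero_mul, Matrix.mul_one, Matrix.one_mul,
          mul_zero, zero_mul, mul_one, one_mul, add_zero, zero_add,
          Units.mul_inv, Units.inv_mul]
        rw [Matrix.fromBlocks_one]⟩

lemma glEmbed₂_injective (F : Type) [Field F] {n₀ n : ℕ} (h : n₀ ≤ n) :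
    Function.Injective (glEmbed₂ F h) := by
  intro u v huv
  have h1 := congrArg (fun w : GL (Fin n) F => w.val) huv
  simp only [glEmbed₂, Units.coe_map] at h1
  have h2 := (Matrix.reindexAlgEquiv F F
        (finSumFinEquiv.trans (finCongr (Nat.add_sub_cancel' h)) :
          Fin n₀ ⊕ Fin (n - n₀) ≃ Fin n)).injective h1
  have h3 := congrArg Matrix.toBlocks₂₂ h2
  simp only [Matrix.toBlocks_fromBlocks₂₂] at h3
  exact Units.ext h3

lemma glEmbed₂_mul_comm (F : Type) [Field F] {n₀ n : ℕ} (h : n₀ ≤ n)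
    (g : GL (Fin n₀) F) (u : GL (Fin (n - n₀)) F) :
    glEmbed₂ F h u * glEmbed F h g = glEmbed F h g * glEmbed₂ F h u := by
  refine Units.ext ?_
  show ((glEmbed₂ F h u).val * (glEmbed F h g).val) = ((glEmbed F h g).val * (glEmbed₂ F h u).val)
  simp only [glEmbed₂, glEmbed, Units.coe_map]
  rw [← _root_.map_mul, ← _root_.map_mul]
  congr 1
  show Matrix.fromBlocks 1 0 0 u.val * Matrix.fromBlocks g.val 0 0 1
      = Matrix.fromBlocks g.val 0 0 1 * Matrix.fromBlocks 1 0 0 u.val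
  rw [Matrix.fromBlocks_multiply, Matrix.fromBlocks_multiply]
  simp

lemma conj_class_card_dvd (F : Type) [Field F] [Fintype F] [DecidableEq F]
    {n₀ n : ℕ} (hn : n₀ ≤ n) (g : GL (Fin n₀) F) :
    Nat.card {h : GL (Fin n) F // IsConj (glEmbed F hn g) h} *
      Nat.card (GL (Fin (n - n₀)) F) ∣ Nat.card (GL (Fin n) F) := by
  classical
  set G := GL (Fin n) F
  set x : G := glEmbed F hn g with hx
  set K := Finset.univ.filter (fun h => IsConj x h) with hK
  have hKcard : Nat.card {h : G // IsConj x h} = K.card := by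
    rw [Nat.card_eq_fintype_card, hK]
    convert Fintype.card_subtype (fun h => IsConj x h)
  rw [hKcard]
  -- orbit card
  have horb : Nat.card (MulAction.orbit (ConjAct G) x) = K.card := by
    have hset : MulAction.orbit (ConjAct G) x = (K : Set G) := by
      ext h
      rw [ConjAct.mem_orbit_conjAct]
      simp only [hK, Finset.coe_filter, Set.mem_setOf_eq, Finset.mem_univ, true_and]
      exact isConj_comm
    rw [Nat.card_congr (Equiv.setCongr hset)]
    simp [Nat.card_coe_set_eq, Set.ncard_coe_finset]
  -- orbit-stabilizer
  have hos : K.card * Nat.card (MulAction.stabilizer (ConjAct G) x) = Nat.card G := by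
    rw [← horb, ← Nat.card_prod]
    exact Nat.card_congr (MulAction.orbitProdStabilizerEquivGroup (ConjAct G) x)
  -- centralizer contains GL_{n-n₀}
  have hdvdC : Nat.card (GL (Fin (n - n₀)) F) ∣ Nat.card (Subgroup.centralizer {x}) := by
    have hmem : ∀ u : GL (Fin (n - n₀)) F, glEmbed₂ F hn u ∈ Subgroup.centralizer {x} := by
      intro u
      rw [Subgroup.mem_centralizer_singleton_iff]
      exact (glEmbed₂_mul_comm F hn g u)
    let ψ : GL (Fin (n - n₀)) F →* Subgroup.centralizer ({x} : Set G) :=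
      { toFun := fun u => ⟨glEmbed₂ F hn u, hmem u⟩
        map_one' := by
          refine Subtype.ext ?_
          show glEmbed₂ F hn 1 = 1
          refine Units.ext ?_
          simp only [glEmbed₂, Units.coe_map]
          show (Matrix.reindexAlgEquiv F F _).toRingEquiv.toMonoidHom
              (Matrix.fromBlocks 1 0 0 ((1 : GL (Fin (n - n₀)) F)).val) = (1 : G).val
          rw [show (Matrix.fromBlocks 1 0 0 ((1 : GL (Fin (n - n₀)) F)).val
              : Matrix (Fin n₀ ⊕ Fin (n - n₀)) (Fin n₀ ⊕ Fin (n - n₀)) F) = 1 by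
            rw [Units.val_one, Matrix.fromBlocks_one]]
          simp
          exact Matrix.submatrix_one_equiv ((finCongr _).trans finSumFinEquiv.symm)
        map_mul' := by
          intro u v
          refine Subtype.ext ?_
          show glEmbed₂ F hn (u * v) = glEmbed₂ F hn u * glEmbed₂ F hn v
          refine Units.ext ?_
          show _ = (glEmbed₂ F hn u).val * (glEmbed₂ F hn v).val
          simp only [glEmbed₂, Units.coe_map]
          rw [← _root_.map_mul]
          congr 1
          rw [Matrix.fromBlocks_multiply]
          simp }
    have hψinj : Function.Injective ψ := by
      intro u v huv
      have := congrArg Subtype.val huv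
      exact glEmbed₂_injective F hn this
    exact Subgroup.card_dvd_of_injective ψ hψinj
  have hcent : Nat.card (Subgroup.centralizer ({x} : Set G)) =
      Nat.card (MulAction.stabilizer (ConjAct G) x) :=
    Subgroup.nat_card_centralizer_nat_card_stabilizer x
  obtain ⟨t, ht⟩ := hdvdC
  refine ⟨t, ?_⟩
  rw [← hos, ← hcent, ht]
  ring



lemma prod_GL_card (q t : ℕ) (hq : 2 ≤ q) :
    ∏ i ∈ range t, (q ^ t - q ^ i) =
      q ^ (∑ i ∈ range t, i) * ∏ j ∈ range t, (q ^ (j + 1) - 1) := by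
  have h1 : ∀ i ∈ range t, q ^ t - q ^ i = q ^ i * (q ^ (t - i) - 1) := by
    intro i hi
    rw [Finset.mem_range] at hi
    rw [Nat.mul_sub, mul_one, ← pow_add]
    congr 2
    omega
  rw [Finset.prod_congr rfl h1, Finset.prod_mul_distrib, Finset.prod_pow_eq_pow_sum]
  congr 1
  rw [← Finset.prod_range_reflect (fun j => q ^ (j + 1) - 1) t]
  refine Finset.prod_congr rfl fun i hi => ?_
  rw [Finset.mem_range] at hi
  congr 2
  omega

lemma nat_card_GL (F : Type) [Field F] [Fintype F] [DecidableEq F] (t : ℕ) :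
    Nat.card (GL (Fin t) F) =
      (Fintype.card F) ^ (∑ i ∈ range t, i) *
        ∏ j ∈ range t, ((Fintype.card F) ^ (j + 1) - 1) := by
  rw [Matrix.card_GL_field, ← prod_GL_card _ _ Fintype.one_lt_card]
  rw [Fin.prod_univ_eq_prod_range (fun i => Fintype.card F ^ t - Fintype.card F ^ i) t]

lemma val_key (q n₀ n k : ℕ) (hq : 2 ≤ q) (hn : n₀ ≤ n) {ℓ : ℕ} (hℓ : ℓ.Prime)
    (hℓq : ¬ ℓ ∣ q) (hk : k ≠ 0)
    (hdvd : k * (q ^ (∑ i ∈ range (n - n₀), i) * ∏ j ∈ range (n - n₀), (q ^ (j + 1) - 1)) ∣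
      q ^ (∑ i ∈ range n, i) * ∏ j ∈ range n, (q ^ (j + 1) - 1)) :
    padicValNat ℓ k ≤ padicValNat ℓ (∏ i ∈ range n₀, (q ^ (n - i) - 1)) := by
  haveI : Fact ℓ.Prime := ⟨hℓ⟩
  set m := n - n₀ with hm
  have hfpos : ∀ j : ℕ, 0 < q ^ (j + 1) - 1 := fun j => by
    have : 2 ≤ q ^ (j + 1) := le_trans hq (Nat.le_self_pow (by omega) q)
    omega
  have hprodpos : ∀ t : ℕ, 0 < ∏ j ∈ range t, (q ^ (j + 1) - 1) := fun t =>
    Finset.prod_pos fun j _ => hfpos j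
  have hPpos : 0 < ∏ i ∈ range n₀, (q ^ (n - i) - 1) := by
    refine Finset.prod_pos fun i hi => ?_
    rw [Finset.mem_range] at hi
    have h1 : 1 ≤ n - i := by omega
    have : 2 ≤ q ^ (n - i) := le_trans hq (Nat.le_self_pow (by omega) q)
    omega
  -- split the big product
  have hsplit : ∏ j ∈ range n, (q ^ (j + 1) - 1) =
      (∏ j ∈ range m, (q ^ (j + 1) - 1)) * ∏ i ∈ range n₀, (q ^ (n - i) - 1) := by
    have hnm : n = m + n₀ := by omega
    rw [hnm, Finset.prod_range_add]
    congr 1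
    rw [← Finset.prod_range_reflect (fun i => q ^ (m + n₀ - i) - 1) n₀]
    refine Finset.prod_congr rfl fun i hi => ?_
    rw [Finset.mem_range] at hi
    congr 2
    omega
  -- valuations
  have hvq : padicValNat ℓ q = 0 := padicValNat.eq_zero_of_not_dvd hℓq
  have hq0 : q ≠ 0 := by omega
  have hnotdvdpow : ∀ s : ℕ, padicValNat ℓ (q ^ s) = 0 := fun s =>
    padicValNat.eq_zero_of_not_dvd (fun hd => hℓq (hℓ.dvd_of_dvd_pow hd))
  have hB0 : (q ^ (∑ i ∈ range n, i) * ∏ j ∈ range n, (q ^ (j + 1) - 1)) ≠ 0 :=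
    Nat.mul_ne_zero (pow_ne_zero _ hq0) (hprodpos n).ne'
  have hv : padicValNat ℓ
      (k * (q ^ (∑ i ∈ range m, i) * ∏ j ∈ range m, (q ^ (j + 1) - 1))) ≤
      padicValNat ℓ (q ^ (∑ i ∈ range n, i) * ∏ j ∈ range n, (q ^ (j + 1) - 1)) :=
    (padicValNat_dvd_iff_le hB0).mp (dvd_trans pow_padicValNat_dvd hdvd)
  rw [padicValNat.mul hk (Nat.mul_ne_zero (pow_ne_zero _ hq0) (hprodpos m).ne'),
    padicValNat.mul (pow_ne_zero _ hq0) (hprodpos m).ne',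
    padicValNat.mul (pow_ne_zero _ hq0) (hprodpos n).ne', hsplit,
    padicValNat.mul (hprodpos m).ne' hPpos.ne', hnotdvdpow, hnotdvdpow] at hv
  omega


end

/-- Let `q` be an odd prime power, `n ≥ n₀ ≥ 1`, `g ∈ GL_{n₀}(𝔽_q) ⊆ GL_n(𝔽_q)` and `d` a
positive integer coprime to `q`. If `χ` is an irreducible complex character of `GL_n(𝔽_q)` of
degree `D = χ(1)` with `v_ℓ(D) − v_ℓ(∏_{i=0}^{n₀−1}(q^{n−i}−1)) ≥ v_ℓ(d)` for every prime
`ℓ ∣ d`, then `χ(g)/d` is an algebraic integer. -/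
theorem stmt6 (q : ℕ) (hq : Odd q) (hqpp : IsPrimePow q)
    (F : Type) [Field F] [Fintype F] [DecidableEq F] (hF : Fintype.card F = q)
    (n₀ n : ℕ) (hn₀ : 1 ≤ n₀) (hn : n₀ ≤ n) (g : GL (Fin n₀) F)
    (d : ℕ) (hd : 0 < d) (hdq : Nat.Coprime d q)
    (V : FDRep ℂ (GL (Fin n) F)) (hV : Simple V)
    (D : ℕ) (hD : V.character 1 = (D : ℂ))
    (hval : ∀ ℓ : ℕ, ℓ.Prime → ℓ ∣ d →
      (padicValNat ℓ d : ℤ) ≤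
        (padicValNat ℓ D : ℤ) -
          (padicValNat ℓ (∏ i ∈ Finset.range n₀, (q ^ (n - i) - 1)) : ℤ)) :
    IsIntegral ℤ (V.character (glEmbed F hn g) / (d : ℂ)) := by
  classical
  have hq2 : 2 ≤ q := hqpp.two_le
  have hDfin : Module.finrank ℂ V = D := by
    have h1 : ((Module.finrank ℂ V : ℂ)) = (D : ℂ) := by rw [← FDRep.char_one V]; exact hD
    exact_mod_cast h1
  have hnt : Nontrivial V := by
    by_contra hns
    rw [not_nontrivial_iff_subsingleton] at hns
    have hid : (𝟙 V : V ⟶ V) = 0 := Action.hom_ext _ _ (FGModuleCat.hom_ext (LinearMap.ext fun v => hns.elim _ _))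
    exact CategoryTheory.id_nonzero V hid
  have hD0 : D ≠ 0 := by
    rw [← hDfin]
    exact Module.finrank_pos.ne'
  obtain ⟨c, hcint, hceq⟩ := classSum_scalar V hV (glEmbed F hn g)
  rw [hDfin] at hceq
  set k := Nat.card {h : GL (Fin n) F // IsConj (glEmbed F hn g) h} with hk
  have hk0 : k ≠ 0 := by
    have : Nonempty {h : GL (Fin n) F // IsConj (glEmbed F hn g) h} :=
      ⟨⟨glEmbed F hn g, IsConj.refl _⟩⟩
    exact Nat.card_pos.ne'
  have hdvdGL := conj_class_card_dvd F hn g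
  rw [nat_card_GL, nat_card_GL, hF] at hdvdGL
  have hkP : ∀ ℓ : ℕ, ℓ.Prime → ℓ ∣ d →
      padicValNat ℓ k ≤ padicValNat ℓ (∏ i ∈ Finset.range n₀, (q ^ (n - i) - 1)) := by
    intro ℓ hℓ hℓd
    have hℓq : ¬ ℓ ∣ q := by
      intro hdv
      have h1 : ℓ ∣ Nat.gcd d q := Nat.dvd_gcd hℓd hdv
      rw [hdq] at h1
      exact hℓ.ne_one (Nat.dvd_one.mp h1)
    exact val_key q n₀ n k hq2 hn hℓ hℓq hk0 hdvdGL
  have hgcd0 : Nat.gcd k D ≠ 0 := fun h => hD0 (Nat.eq_zero_of_gcd_eq_zero_right h)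
  have hdg : d * Nat.gcd k D ∣ D := by
    rw [← Nat.factorization_le_iff_dvd (mul_ne_zero hd.ne' hgcd0) hD0,
      Nat.factorization_mul hd.ne' hgcd0]
    refine Finsupp.le_def.mpr fun p => ?_
    simp only [Finsupp.coe_add, Pi.add_apply]
    by_cases hp : p.Prime
    · by_cases hpd : p ∣ d
      · have h1 := hval p hp hpd
        have h2 := hkP p hp hpd
        have hgk : (Nat.gcd k D).factorization p ≤ k.factorization p :=
          Finsupp.le_def.mp ((Nat.factorization_le_iff_dvd hgcd0 hk0).mpr
            (Nat.gcd_dvd_left k D)) p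
        rw [Nat.factorization_def d hp, Nat.factorization_def D hp] at *
        rw [Nat.factorization_def k hp] at hgk
        omega
      · have h0 : d.factorization p = 0 := Nat.factorization_eq_zero_of_not_dvd hpd
        have hgD : (Nat.gcd k D).factorization p ≤ D.factorization p :=
          Finsupp.le_def.mp ((Nat.factorization_le_iff_dvd hgcd0 hD0).mpr
            (Nat.gcd_dvd_right k D)) p
        omega
    · have h0 : d.factorization p = 0 := Nat.factorization_eq_zero_of_not_prime d hp
      have h1 : (Nat.gcd k D).factorization p = 0 :=
        Nat.factorization_eq_zero_of_not_prime _ hp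
      simp [h0, h1]
  obtain ⟨t, ht⟩ := hdg
  have hd0C : (d : ℂ) ≠ 0 := Nat.cast_ne_zero.mpr hd.ne'
  have hD0C : (D : ℂ) ≠ 0 := Nat.cast_ne_zero.mpr hD0
  have h1C : (D : ℂ) = (d : ℂ) * (Nat.gcd k D : ℂ) * (t : ℂ) := by exact_mod_cast ht
  have h2C : (Nat.gcd k D : ℂ) =
      (k : ℂ) * ((Nat.gcdA k D : ℤ) : ℂ) + (D : ℂ) * ((Nat.gcdB k D : ℤ) : ℂ) := by
    exact_mod_cast congrArg (fun z : ℤ => (z : ℂ)) (Nat.gcd_eq_gcd_ab k D)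
  have hmain : V.character (glEmbed F hn g) * (D : ℂ) =
      (((t : ℂ) * ((Nat.gcdA k D : ℤ) : ℂ)) * c +
        ((t : ℂ) * ((Nat.gcdB k D : ℤ) : ℂ)) * V.character (glEmbed F hn g)) * (d : ℂ) *
        (D : ℂ) := by
    linear_combination (-(d : ℂ) * (t : ℂ) * ((Nat.gcdA k D : ℤ) : ℂ)) * hceq +
      ((d : ℂ) * (t : ℂ) * V.character (glEmbed F hn g)) * h2C +
      V.character (glEmbed F hn g) * h1C
  have hfinal : V.character (glEmbed F hn g) / (d : ℂ) =
      ((t : ℂ) * ((Nat.gcdA k D : ℤ) : ℂ)) * c +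
        ((t : ℂ) * ((Nat.gcdB k D : ℤ) : ℂ)) * V.character (glEmbed F hn g) := by
    rw [div_eq_iff hd0C]
    exact mul_right_cancel₀ hD0C (by linear_combination hmain)
  rw [hfinal]
  have hχ : IsIntegral ℤ (V.character (glEmbed F hn g)) := char_isIntegral V (glEmbed F hn g)
  have hint : ∀ z : ℤ, IsIntegral ℤ ((z : ℤ) : ℂ) := fun z => isIntegral_algebraMap
  have htC : IsIntegral ℤ ((t : ℂ)) := by
    have := hint (t : ℤ)
    simpa using this
  exact ((htC.mul (hint _)).mul hcint).add ((htC.mul (hint _)).mul hχ)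
end

section
/- Let q be an odd prime power and let g ∈ GL_2(𝔽_q). Consider the permutation of the projective line ℙ¹(𝔽_q) (the set of one-dimensional subspaces of 𝔽_q²) induced by the natural action of g. Then the sign of this permutation equals 1 if det(g) is a square in 𝔽_qˣ, and equals −1 otherwise. -/
open Matrix Projectivization

variable {F : Type} [Field F]

/-- Permutation of the projective line induced by a linear equivalence. -/
noncomputable def pmLin : ((Fin 2 → F) ≃ₗ[F] (Fin 2 → F)) →* Equiv.Perm (Projectivization F (Fin 2 → F)) where
  toFun e :=
    { toFun := Projectivization.map e.toLinearMap e.injective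
      invFun := Projectivization.map e.symm.toLinearMap e.symm.injective
      left_inv := fun p => by
        induction p using Projectivization.ind with
        | h v hv => rw [Projectivization.map_mk, Projectivization.map_mk]; simp
      right_inv := fun p => by
        induction p using Projectivization.ind with
        | h v hv => rw [Projectivization.map_mk, Projectivization.map_mk]; simp }
  map_one' := by
    ext p
    induction p using Projectivization.ind with
    | h v hv => simp [Projectivization.map_mk]
  map_mul' e₁ e₂ := by
    ext p
    induction p using Projectivization.ind with
    | h v hv => simp only [Projectivization.map_mk, Equiv.coe_fn_mk, Equiv.Perm.coe_mul,
        Function.comp_apply]; rfl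

noncomputable def pmOf (g : GL (Fin 2) F) : Equiv.Perm (Projectivization F (Fin 2 → F)) :=
  pmLin ((LinearMap.GeneralLinearGroup.generalLinearEquiv F (Fin 2 → F))
    (Matrix.GeneralLinearGroup.toLin g))

noncomputable def pmHom : GL (Fin 2) F →* Equiv.Perm (Projectivization F (Fin 2 → F)) :=
  pmLin.comp ((LinearMap.GeneralLinearGroup.generalLinearEquiv F (Fin 2 → F)).toMonoidHom.comp
    (Matrix.GeneralLinearGroup.toLin (n := Fin 2) (R := F)).toMonoidHom)

example (g : GL (Fin 2) F) : pmHom g = pmOf g := rfl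

theorem pmOf_apply (g : GL (Fin 2) F) (v : Fin 2 → F) (hv : v ≠ 0)
    (hv' : g.val.mulVec v ≠ 0) :
    pmOf g (Projectivization.mk F v hv) = Projectivization.mk F (g.val.mulVec v) hv' := by
  have : pmOf g (Projectivization.mk F v hv) =
      Projectivization.map _ ((LinearMap.GeneralLinearGroup.generalLinearEquiv F (Fin 2 → F))
        (Matrix.GeneralLinearGroup.toLin g)).injective (Projectivization.mk F v hv) := rfl
  rw [this, Projectivization.map_mk]
  rfl

variable {F : Type} [Field F]

theorem vne (x : F) : (![x, 1] : Fin 2 → F) ≠ 0 := by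
  intro h; simpa using congrFun h 1

theorem vne' : (![1, 0] : Fin 2 → F) ≠ 0 := by
  intro h; simpa using congrFun h 0

/-- The projective line over `F` is `F` plus a point at infinity. -/
noncomputable def projEquiv : F ⊕ Unit ≃ Projectivization F (Fin 2 → F) :=
  Equiv.ofBijective
    (Sum.elim (fun x => Projectivization.mk F ![x, 1] (vne x))
      (fun _ => Projectivization.mk F ![1, 0] vne')) <| by
  constructor
  · rintro (x | u) (y | w) h <;>
      simp only [Sum.elim_inl, Sum.elim_inr, mk_eq_mk_iff] at h
    · obtain ⟨a, ha⟩ := h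
      have h1 := congrFun ha 1
      have h0 := congrFun ha 0
      simp [Units.smul_def] at h1 h0
      simp [h1] at h0
      simp [h0]
    · obtain ⟨a, ha⟩ := h
      have h1 := congrFun ha 1
      simp [Units.smul_def] at h1
    · obtain ⟨a, ha⟩ := h
      have h1 := congrFun ha 1
      simp [Units.smul_def] at h1
    · rfl
  · intro p
    induction p using Projectivization.ind with
    | h v hv =>
      by_cases h1 : v 1 = 0
      · have h0 : v 0 ≠ 0 := by
          intro h0
          apply hv
          funext i
          fin_cases i <;> assumption
        refine ⟨Sum.inr (), Eq.symm ?_⟩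
        rw [Sum.elim_inr, mk_eq_mk_iff]
        exact ⟨Units.mk0 (v 0) h0, by
          funext i; fin_cases i <;> simp [Units.smul_def, h1]⟩
      · refine ⟨Sum.inl (v 0 / v 1), Eq.symm ?_⟩
        rw [Sum.elim_inl, mk_eq_mk_iff]
        refine ⟨Units.mk0 (v 1) h1, ?_⟩
        funext i
        fin_cases i <;> simp [Units.smul_def]
        field_simp

variable {F : Type} [Field F] [Fintype F] [DecidableEq F]

/-- The sign of multiplication by a unit on `F`, as a homomorphism (Zolotarev's character). -/
noncomputable def Zchar (F : Type) [Field F] [Fintype F] [DecidableEq F] : Fˣ →* ℤˣ :=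
  Equiv.Perm.sign.comp (MulAction.toPermHom Fˣ F)

theorem Zchar_sq (b : Fˣ) : Zchar F (b * b) = 1 := by
  rw [_root_.map_mul]
  exact Int.units_mul_self _

theorem Zchar_gen (hodd : Odd (Fintype.card F)) (ζ : Fˣ)
    (hζ : ∀ x : Fˣ, x ∈ Subgroup.zpowers ζ) : Zchar F ζ = -1 := by
  have hcard : Even (Fintype.card Fˣ) := by
    rw [Fintype.card_units]
    exact Nat.Odd.sub_odd hodd odd_one
  have hζ1 : ζ ≠ 1 := by
    intro h
    rw [Fintype.card_eq_one_iff.mpr ⟨1, fun x => by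
      obtain ⟨k, hk⟩ := hζ x
      rw [← hk]; simp [h]⟩] at hcard
    simp at hcard
  set σ : Equiv.Perm F := MulAction.toPermHom Fˣ F ζ with hσ
  have hσx : ∀ x : F, σ x = (ζ : F) * x := fun x => rfl
  have hcyc : σ.IsCycle := by
    refine ⟨1, ?_, ?_⟩
    · rw [hσx]
      simpa using fun h => hζ1 (Units.ext h)
    · intro y hy
      have hy0 : y ≠ 0 := by
        intro h
        rw [hσx, h, mul_zero] at hy
        exact hy rfl
      obtain ⟨k, hk⟩ := hζ (Units.mk0 y hy0)
      have hk' : ζ ^ k = Units.mk0 y hy0 := hk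
      refine ⟨k, ?_⟩
      have : σ ^ k = MulAction.toPermHom Fˣ F (ζ ^ k) := by rw [map_zpow]
      rw [this]
      show ((ζ ^ k : Fˣ) : F) * 1 = y
      rw [hk', mul_one]
      rfl
  have hsupp : σ.support = ({0} : Finset F)ᶜ := by
    ext x
    simp only [Equiv.Perm.mem_support, Finset.mem_compl, Finset.mem_singleton]
    constructor
    · intro h hx
      exact h (by rw [hσx, hx, mul_zero])
    · intro hx h
      rw [hσx] at h
      exact hζ1 (Units.ext ((mul_left_eq_self₀.mp h).resolve_right hx))
  have := hcyc.sign
  rw [hsupp] at this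
  have hc : (({0} : Finset F)ᶜ).card = Fintype.card F - 1 := by
    rw [Finset.card_compl, Finset.card_singleton]
  rw [hc] at this
  have heven : Even (Fintype.card F - 1) := Nat.Odd.sub_odd hodd odd_one
  show Equiv.Perm.sign σ = -1
  rw [this, heven.neg_one_pow]

theorem Zchar_eq_one (a : Fˣ) (h : ∃ y : F, y * y = (a : F)) : Zchar F a = 1 := by
  obtain ⟨y, hy⟩ := h
  have hy0 : y ≠ 0 := by
    intro h
    rw [h, mul_zero] at hy
    exact a.ne_zero hy.symm
  have : a = Units.mk0 y hy0 * Units.mk0 y hy0 := Units.ext (by simp [hy])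
  rw [this]
  exact Zchar_sq _

theorem Zchar_eq_neg_one (hodd : Odd (Fintype.card F)) (a : Fˣ)
    (h : ¬∃ y : F, y * y = (a : F)) : Zchar F a = -1 := by
  obtain ⟨ζ, hζ⟩ := IsCyclic.exists_generator (α := Fˣ)
  obtain ⟨n, hn⟩ := (mem_powers_iff_mem_zpowers.mpr (hζ a) : a ∈ Submonoid.powers ζ)
  have hn : ζ ^ n = a := hn
  rcases Nat.even_or_odd n with he | ho
  · exfalso
    apply h
    obtain ⟨m, hm⟩ := he
    refine ⟨((ζ ^ m : Fˣ) : F), ?_⟩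
    rw [← Units.val_mul, ← pow_add, ← hm, hn]
  · rw [← hn, map_pow, Zchar_gen hodd ζ hζ, ho.neg_one_pow]

section Diag

variable [Fintype F] [DecidableEq F]
variable [Fintype (Projectivization F (Fin 2 → F))]
variable [DecidableEq (Projectivization F (Fin 2 → F))]

theorem sign_pmOf_diagonal (a d : F) (ha : a ≠ 0) (hd : d ≠ 0)
    (u : GL (Fin 2) F) (hu : u.val = diagonal ![a, d]) :
    Equiv.Perm.sign (pmOf u) = Zchar F (Units.mk0 (a * d⁻¹) (by
      exact mul_ne_zero ha (inv_ne_zero hd))) := by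
  set c : Fˣ := Units.mk0 (a * d⁻¹) (mul_ne_zero ha (inv_ne_zero hd)) with hc
  have key : pmOf u = projEquiv.permCongr
      (Equiv.sumCongr (MulAction.toPermHom Fˣ F c) (Equiv.refl Unit)) := by
    apply Equiv.ext
    intro p
    rw [← projEquiv.apply_symm_apply p]
    generalize projEquiv.symm p = s
    rw [Equiv.permCongr_apply, Equiv.symm_apply_apply]
    rcases s with x | w
    · have hmv : u.val.mulVec ![x, 1] = ![a * x, d] := by
        rw [hu]
        funext i
        fin_cases i <;> simp [mulVec_diagonal]
      have hne : u.val.mulVec ![x, 1] ≠ 0 := by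
        rw [hmv]; intro h; exact hd (by simpa using congrFun h 1)
      show pmOf u (Projectivization.mk F ![x, 1] (vne x)) = _
      rw [pmOf_apply u ![x, 1] (vne x) hne]
      show _ = Projectivization.mk F ![(c : F) * x, 1] (vne _)
      rw [Projectivization.mk_eq_mk_iff]
      refine ⟨Units.mk0 d hd, ?_⟩
      rw [hmv]
      funext i
      fin_cases i <;> simp [Units.smul_def, hc] <;> field_simp
    · have hmv : u.val.mulVec ![1, 0] = ![a, 0] := by
        rw [hu]
        funext i
        fin_cases i <;> simp [mulVec_diagonal]
      have hne : u.val.mulVec ![1, 0] ≠ 0 := by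
        rw [hmv]; intro h; exact ha (by simpa using congrFun h 0)
      show pmOf u (Projectivization.mk F ![1, 0] vne') = _
      rw [pmOf_apply u ![1, 0] vne' hne]
      show _ = Projectivization.mk F ![1, 0] vne'
      rw [Projectivization.mk_eq_mk_iff]
      refine ⟨Units.mk0 a ha, ?_⟩
      rw [hmv]
      funext i
      fin_cases i <;> simp [Units.smul_def]
  rw [key, Equiv.Perm.sign_permCongr, Equiv.Perm.sign_sumCongr]
  simp [Zchar]

end Diag

theorem transvection_pow {i j : Fin 2} (hij : i ≠ j) (c : F) (n : ℕ) :
    (Matrix.transvection i j c) ^ n = Matrix.transvection i j ((n : F) * c) := by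
  induction n with
  | zero => simp [Matrix.transvection_zero]
  | succ n ih =>
    rw [pow_succ, ih, Matrix.transvection_mul_transvection_same i j hij]
    push_cast
    ring_nf

section Assemble

variable [Fintype F] [DecidableEq F]
variable [Fintype (Projectivization F (Fin 2 → F))]
variable [DecidableEq (Projectivization F (Fin 2 → F))]

noncomputable def Phi : GL (Fin 2) F →* ℤˣ :=
  Equiv.Perm.sign.comp pmHom

theorem Phi_transvection (hodd : Odd (Fintype.card F))
    (t : Matrix.TransvectionStruct (Fin 2) F)
    (u : GL (Fin 2) F) (hu : u.val = t.toMatrix) : Phi u = 1 := by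
  set p := ringChar F with hp
  have hppos : p.Prime := CharP.char_is_prime F p
  have hpodd : Odd p := by
    rcases hppos.eq_two_or_odd' with h2 | h
    · exfalso
      obtain ⟨nn, hn⟩ := FiniteField.card F p
      have hodd' := hodd
      rw [hn.2, h2] at hodd'
      have : Even ((2:ℕ) ^ (nn:ℕ)) := Nat.even_pow.mpr ⟨even_two, by simpa using nn.ne_zero⟩
      rw [← Nat.not_odd_iff_even] at this
      exact this hodd'
    · exact h
  have hup : u ^ p = 1 := by
    apply Units.ext
    rw [Units.val_pow_eq_pow_val, hu, Units.val_one]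
    rcases t with ⟨i, j, hij, ct⟩
    show Matrix.transvection i j ct ^ p = 1
    rw [transvection_pow hij, CharP.cast_eq_zero F p, zero_mul,
      Matrix.transvection_zero]
  have := congrArg Phi hup
  rw [map_pow, _root_.map_one] at this
  rcases Int.units_eq_one_or (Phi u) with h | h
  · exact h
  · rw [h, hpodd.neg_one_pow] at this
    exact absurd this (by decide)

end Assemble

/-- Let `q` be odd and `g ∈ GL_2(𝔽_q)`. The permutation induced by `g` on the projective line
`ℙ¹(𝔽_q)` has sign `+1` if `det g` is a square in `𝔽_qˣ`, and `−1` otherwise. -/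
theorem stmt9 (q : ℕ) (hq : Odd q) (hqpp : IsPrimePow q)
    (F : Type) [Field F] [Fintype F] [DecidableEq F] (hF : Fintype.card F = q)
    [Fintype (Projectivization F (Fin 2 → F))]
    [DecidableEq (Projectivization F (Fin 2 → F))]
    (g : GL (Fin 2) F)
    (ρ : Equiv.Perm (Projectivization F (Fin 2 → F)))
    (hρ : ∀ (v : Fin 2 → F) (hv : v ≠ 0) (hv' : g.val.mulVec v ≠ 0),
      ρ (Projectivization.mk F v hv) = Projectivization.mk F (g.val.mulVec v) hv') :
    ((∃ y : F, y * y = g.val.det) → Equiv.Perm.sign ρ = 1) ∧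
    (¬(∃ y : F, y * y = g.val.det) → Equiv.Perm.sign ρ = -1) := by
  have hodd : Odd (Fintype.card F) := hF ▸ hq
  -- ρ is the permutation induced by g
  have hρeq : ρ = pmOf g := by
    apply Equiv.ext
    intro p
    induction p using Projectivization.ind with
    | h v hv =>
      have hv' : g.val.mulVec v ≠ 0 := by
        intro h
        apply hv
        have hkey : (g⁻¹).val.mulVec (g.val.mulVec v) = v := by
          rw [Matrix.mulVec_mulVec, ← Units.val_mul, inv_mul_cancel, Units.val_one,
            Matrix.one_mulVec]
        rw [h, Matrix.mulVec_zero] at hkey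
        exact hkey.symm
      rw [hρ v hv hv', pmOf_apply g v hv hv']
  -- determinant is nonzero
  have detne : g.val.det ≠ 0 := by
    have : IsUnit (g.val.det) := (Matrix.isUnit_iff_isUnit_det _).mp g.isUnit
    exact this.ne_zero
  -- decomposition
  obtain ⟨L, L', D, hdec⟩ :=
    Matrix.Pivot.exists_list_transvec_mul_diagonal_mul_list_transvec g.val
  have hdet : g.val.det = D 0 * D 1 := by
    rw [hdec]
    rw [Matrix.det_mul, Matrix.det_mul, Matrix.TransvectionStruct.det_toMatrix_prod,
      Matrix.TransvectionStruct.det_toMatrix_prod, Matrix.det_diagonal, Fin.prod_univ_two]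
    ring
  have hD0 : D 0 ≠ 0 := fun h => detne (by rw [hdet, h, zero_mul])
  have hD1 : D 1 ≠ 0 := fun h => detne (by rw [hdet, h, mul_zero])
  -- lift decomposition to units
  set tu : Matrix.TransvectionStruct (Fin 2) F → GL (Fin 2) F := fun t =>
    Matrix.GeneralLinearGroup.mkOfDetNeZero t.toMatrix
      (by rw [Matrix.TransvectionStruct.det]; exact one_ne_zero) with htu
  set du : GL (Fin 2) F := Matrix.GeneralLinearGroup.mkOfDetNeZero (Matrix.diagonal D)
    (by rw [Matrix.det_diagonal, Fin.prod_univ_two]; exact mul_ne_zero hD0 hD1) with hdu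
  have hval : ∀ (M : List (Matrix.TransvectionStruct (Fin 2) F)),
      (((M.map tu).prod : GL (Fin 2) F) : Matrix (Fin 2) (Fin 2) F)
        = (M.map Matrix.TransvectionStruct.toMatrix).prod := by
    intro M
    rw [show (((M.map tu).prod : GL (Fin 2) F) : Matrix (Fin 2) (Fin 2) F)
        = (Units.coeHom _) ((M.map tu).prod) from rfl,
      MonoidHom.map_list_prod, List.map_map]
    rfl
  have hg : g = (L.map tu).prod * du * (L'.map tu).prod := by
    apply Units.ext
    rw [Units.val_mul, Units.val_mul, hval, hval]
    exact hdec
  -- Phi of transvection lists is 1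
  have hT : ∀ (M : List (Matrix.TransvectionStruct (Fin 2) F)),
      Phi ((M.map tu).prod) = 1 := by
    intro M
    rw [MonoidHom.map_list_prod]
    apply List.prod_eq_one
    intro x hx
    rw [List.map_map, List.mem_map] at hx
    obtain ⟨t, _, rfl⟩ := hx
    exact Phi_transvection hodd t (tu t) rfl
  -- compute Phi g
  have hcne : D 0 * (D 1)⁻¹ ≠ 0 := mul_ne_zero hD0 (inv_ne_zero hD1)
  have hPhig : Phi g = Zchar F (Units.mk0 (D 0 * (D 1)⁻¹) hcne) := by
    rw [hg, _root_.map_mul, _root_.map_mul, hT, hT, one_mul, mul_one]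
    have hdudiag : du.val = Matrix.diagonal ![D 0, D 1] := by
      show Matrix.diagonal D = _
      congr 1
      funext i
      fin_cases i <;> rfl
    exact sign_pmOf_diagonal (D 0) (D 1) hD0 hD1 du hdudiag
  have hsign : Equiv.Perm.sign ρ = Phi g := by rw [hρeq]; rfl
  -- transfer the square condition
  have hiff : (∃ y : F, y * y = g.val.det) ↔ (∃ y : F, y * y = D 0 * (D 1)⁻¹) := by
    rw [hdet]
    constructor
    · rintro ⟨y, hy⟩
      refine ⟨y * (D 1)⁻¹, ?_⟩
      field_simp
      linear_combination hy
    · rintro ⟨y, hy⟩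
      refine ⟨y * D 1, ?_⟩
      field_simp at hy ⊢
      linear_combination hy
  constructor
  · intro h
    rw [hsign, hPhig]
    exact Zchar_eq_one _ (hiff.mp h)
  · intro h
    rw [hsign, hPhig]
    exact Zchar_eq_neg_one hodd _ (fun hc => h (hiff.mpr hc))
end

section
/- Let q be an odd prime power. Then the number of conjugacy classes of GL_2(𝔽_q) equals q² − 1. -/
open Matrix

/-!
A non-scalar `A ∈ GL₂(F)` has a cyclic vector `v`, and in the basis `(v, Av)` it becomes, by
Cayley–Hamilton, the companion matrix of `X² - (tr A) X + det A`. Scalar matrices are central,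
so each is alone in its class. Hence the classes are the `q - 1` scalars together with one class
for each pair `(tr, det) ∈ F × Fˣ`, in all `(q - 1) + q (q - 1) = q² - 1`.
-/

namespace GLTwo

variable {n R : Type*} [Fintype n] [DecidableEq n] [CommRing R]

theorem trace_eq_of_isConj {A B : GL n R} (h : IsConj A B) :
    trace (A : Matrix n n R) = trace (B : Matrix n n R) := by
  obtain ⟨c, rfl⟩ := isConj_iff.mp h
  exact (trace_units_conj c A).symm

theorem det_eq_of_isConj {A B : GL n R} (h : IsConj A B) :
    det (A : Matrix n n R) = det (B : Matrix n n R) :=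
  congrArg Units.val (isConj_iff_eq.mp (GeneralLinearGroup.det.map_isConj h))

theorem eq_of_isConj_scalar {u : Rˣ} {B : GL n R}
    (h : IsConj (GeneralLinearGroup.scalar n u) B) :
    GeneralLinearGroup.scalar n u = B :=
  h.eq_of_left_mem_center <|
    Semigroup.mem_center_iff.mpr fun A => (GeneralLinearGroup.scalar_commute u A).symm

theorem isConj_of_mul_eq_mul {A B : GL n R} (P : Matrix n n R) (hP : IsUnit P.det)
    (h : P * A = B * P) : IsConj A B :=
  ⟨toUnits (GeneralLinearGroup.mk'' P hP), by
    ext i j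
    simp [h]⟩

variable {F : Type*} [Field F]

/-- The companion matrix of `X² - t X + d`. -/
def companionGL (t : F) (d : Fˣ) : GL (Fin 2) F :=
  GeneralLinearGroup.mkOfDetNeZero !![0, -(d : F); 1, t] (by simp [det_fin_two_of])

theorem isConj_companionGL_of_cyclic (A : GL (Fin 2) F) (v : Fin 2 → F)
    (hv : det (of ![v, (A : Matrix (Fin 2) (Fin 2) F) *ᵥ v])ᵀ ≠ 0) :
    IsConj (companionGL (trace (A : Matrix (Fin 2) (Fin 2) F)) (GeneralLinearGroup.det A)) A := by
  refine isConj_of_mul_eq_mul _ (isUnit_iff_ne_zero.mpr hv) ?_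
  ext i j
  fin_cases i <;> fin_cases j <;>
    simp [companionGL, Fin.sum_univ_two, trace_fin_two, det_fin_two, Matrix.mul_apply] <;> ring

theorem exists_cyclic_vector (A : Matrix (Fin 2) (Fin 2) F)
    (hA : A ∉ Set.range (scalar (Fin 2))) :
    ∃ v : Fin 2 → F, det (of ![v, A *ᵥ v])ᵀ ≠ 0 := by
  rcases ne_or_eq (A 1 0) 0 with h10 | h10
  · exact ⟨![1, 0], by simpa [det_fin_two] using h10⟩
  rcases ne_or_eq (A 0 1) 0 with h01 | h01
  · exact ⟨![0, 1], by simpa [det_fin_two] using h01⟩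
  have hdiag : A 0 0 ≠ A 1 1 := fun h => hA ⟨A 0 0, by
    ext i j
    fin_cases i <;> fin_cases j <;> simp [h, h10, h01]⟩
  exact ⟨![1, 1], by simpa [det_fin_two, h10, h01, sub_eq_zero] using hdiag.symm⟩

theorem exists_scalar_eq_or_isConj_companionGL (A : GL (Fin 2) F) :
    (∃ u, GeneralLinearGroup.scalar (Fin 2) u = A) ∨ ∃ t d, IsConj (companionGL t d) A := by
  by_cases hA : A ∈ Subgroup.center (GL (Fin 2) F)
  · rw [GeneralLinearGroup.center_eq_range_scalar] at hA
    exact .inl hA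
  · rw [GeneralLinearGroup.mem_center_iff_val_mem_range_scalar] at hA
    obtain ⟨v, hv⟩ := exists_cyclic_vector _ hA
    exact .inr ⟨_, _, isConj_companionGL_of_cyclic A v hv⟩

theorem eq_of_isConj_scalar_scalar {u u' : Fˣ}
    (h : IsConj (GeneralLinearGroup.scalar (Fin 2) u) (GeneralLinearGroup.scalar (Fin 2) u')) :
    u = u' := by
  have := congrArg (fun B : GL (Fin 2) F => B 0 0) (eq_of_isConj_scalar h)
  exact Units.ext (by simpa using this)

theorem not_isConj_scalar_companionGL (u : Fˣ) (t : F) (d : Fˣ) :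
    ¬ IsConj (GeneralLinearGroup.scalar (Fin 2) u) (companionGL t d) := fun h => by
  simpa [companionGL] using congrArg (fun B : GL (Fin 2) F => B 1 0) (eq_of_isConj_scalar h)

theorem eq_and_eq_of_isConj_companionGL {t t' : F} {d d' : Fˣ}
    (h : IsConj (companionGL t d) (companionGL t' d')) : t = t' ∧ d = d' := by
  have htr := trace_eq_of_isConj h
  have hdet := det_eq_of_isConj h
  simp only [companionGL, GeneralLinearGroup.val_mkOfDetNeZero, trace_fin_two_of,
    det_fin_two_of] at htr hdet
  exact ⟨by simpa using htr, Units.ext (by simpa using hdet)⟩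

def conjClassesRep : Fˣ ⊕ F × Fˣ → ConjClasses (GL (Fin 2) F) :=
  Sum.elim (fun u => .mk (GeneralLinearGroup.scalar (Fin 2) u)) fun p => .mk (companionGL p.1 p.2)

theorem conjClassesRep_bijective : (conjClassesRep (F := F)).Bijective := by
  constructor
  · rintro (u | ⟨t, d⟩) (u' | ⟨t', d'⟩) h <;>
      simp only [conjClassesRep, Sum.elim_inl, Sum.elim_inr, ConjClasses.mk_eq_mk_iff_isConj] at h
    · rw [eq_of_isConj_scalar_scalar h]
    · exact absurd h (not_isConj_scalar_companionGL _ _ _)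
    · exact absurd h.symm (not_isConj_scalar_companionGL _ _ _)
    · obtain ⟨rfl, rfl⟩ := eq_and_eq_of_isConj_companionGL h
      rfl
  · intro c
    obtain ⟨A, rfl⟩ := ConjClasses.mk_surjective c
    rcases exists_scalar_eq_or_isConj_companionGL A with ⟨u, rfl⟩ | ⟨t, d, h⟩
    · exact ⟨.inl u, rfl⟩
    · exact ⟨.inr (t, d), ConjClasses.mk_eq_mk_iff_isConj.mpr h⟩

theorem card_conjClasses_GL_two [Finite F] :
    Nat.card (ConjClasses (GL (Fin 2) F)) = Nat.card F ^ 2 - 1 := by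
  rw [← Nat.card_eq_of_bijective _ conjClassesRep_bijective, Nat.card_sum, Nat.card_prod,
    Nat.card_units, ← one_add_mul, add_comm, ← Nat.sq_sub_sq, one_pow]

end GLTwo

theorem stmt10_general (q : ℕ)
    (F : Type) [Field F] [Fintype F] (hF : Fintype.card F = q) :
    Nat.card (ConjClasses (GL (Fin 2) F)) = q ^ 2 - 1 := by
  rw [GLTwo.card_conjClasses_GL_two, Nat.card_eq_fintype_card, hF]

/-- For `q` an odd prime power, `GL_2(𝔽_q)` has exactly `q² − 1` conjugacy classes. -/
theorem stmt10 (q : ℕ) (hq : Odd q) (hqpp : IsPrimePow q)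
    (F : Type) [Field F] [Fintype F] [DecidableEq F] (hF : Fintype.card F = q) :
    Nat.card (ConjClasses (GL (Fin 2) F)) = q ^ 2 - 1 :=
  stmt10_general q F hF
end
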